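/- Under the assumptions: Ω of finite measure, 0 < δ₁ ≤ b ≤ δ₂, p₀ ≤ p ≤ P₀ with p₀ > 0, |b²(y₀)−b²(y)| ≤ b*(n−1)|y₀−y| for all y ∈ Ω, and diam Ω ≤ R, the bound |I(p) − 1/b̲²| ≤ b*(n−1)R·P₀·|Ω| / (b̲²·δ₁²·p₀·|Ω|) = b*(n−1)R·P₀/(b̲² δ₁² p₀) holds, where b̲ = b(y₀) and I(p) = (∫_Ω p)/(∫_Ω b² p). -/

import Mathlib

/-!
Since `b² ≥ δ₁²` and `p ≥ p₀`, the denominator `∫_Ω b² p` is at least `δ₁² p₀ |Ω|`, and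
`I(p) - 1/b(y₀)² = (b(y₀)² ∫_Ω p - ∫_Ω b² p) / (b(y₀)² ∫_Ω b² p)`. The numerator is
`∫_Ω (b(y₀)² - b²) p`, and the Lipschitz bound together with `diam Ω ≤ R` makes its integrand at
most `b* (n-1) R P₀` in absolute value, so the factor `|Ω|` cancels.
-/

open MeasureTheory

section SetIntegral

variable {α : Type*} [MeasurableSpace α] {μ : Measure α} {s : Set α}

lemma integrableOn_of_nonneg_of_le {f : α → ℝ} {M : ℝ} (hμs : μ s ≠ ⊤)
    (hf : AEStronglyMeasurable f μ) (hs : MeasurableSet s) (h0 : ∀ x ∈ s, 0 ≤ f x)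
    (hM : ∀ x ∈ s, f x ≤ M) : IntegrableOn f s μ := by
  refine Measure.integrableOn_of_bounded hμs hf (M := M) ?_
  filter_upwards [ae_restrict_mem hs] with x hx
  rw [Real.norm_eq_abs, abs_of_nonneg (h0 x hx)]
  exact hM x hx

lemma abs_mul_setIntegral_sub_setIntegral_mul_le {w p : α → ℝ} {c K P : ℝ} (hμs : μ s < ⊤)
    (hp : IntegrableOn p s μ) (hwp : IntegrableOn (fun x ↦ w x * p x) s μ)
    (hwK : ∀ x ∈ s, |c - w x| ≤ K) (hpP : ∀ x ∈ s, |p x| ≤ P) :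
    |c * ∫ x in s, p x ∂μ - ∫ x in s, w x * p x ∂μ| ≤ K * P * μ.real s := by
  have h_eq : c * ∫ x in s, p x ∂μ - ∫ x in s, w x * p x ∂μ = ∫ x in s, (c - w x) * p x ∂μ := by
    rw [← integral_const_mul, ← integral_sub (hp.const_mul c) hwp]
    simp only [sub_mul]
  rw [h_eq, ← Real.norm_eq_abs]
  refine norm_setIntegral_le_of_norm_le_const hμs fun x hx ↦ ?_
  rw [Real.norm_eq_abs, abs_mul]
  exact mul_le_mul (hwK x hx) (hpP x hx) (abs_nonneg _) ((abs_nonneg _).trans (hwK x hx))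

end SetIntegral

lemma abs_div_sub_one_div_le {A B c V E L : ℝ} (hc : 0 < c) (hV : 0 < V) (hL : 0 < L)
    (hB : L * V ≤ B) (hnum : |c * A - B| ≤ E * V) : |A / B - 1 / c| ≤ E / (c * L) := by
  have hB_pos : 0 < B := (mul_pos hL hV).trans_le hB
  have hE : 0 ≤ E := nonneg_of_mul_nonneg_left ((abs_nonneg _).trans hnum) hV
  calc |A / B - 1 / c| = |c * A - B| / (B * c) := by
        rw [div_sub_div A 1 hB_pos.ne' hc.ne', abs_div, abs_of_pos (mul_pos hB_pos hc)]
        ring_nf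
    _ ≤ E * V / (L * V * c) := by gcongr
    _ = E / (c * L) := by field_simp

theorem stmt_7 (m : ℕ) (Ω : Set (EuclideanSpace ℝ (Fin m)))
    (hΩm : MeasurableSet Ω) (hΩpos : 0 < volume Ω) (hΩbd : Bornology.IsBounded Ω)
    (p b : EuclideanSpace ℝ (Fin m) → ℝ) (hpm : Measurable p) (hbm : Measurable b)
    (p₀ P₀ δ₁ δ₂ bs R : ℝ) (hp₀ : 0 < p₀) (hδ₁ : 0 < δ₁) (hbs : 0 < bs)
    (hp : ∀ y ∈ Ω, p₀ ≤ p y ∧ p y ≤ P₀)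
    (hb : ∀ y ∈ Ω, δ₁ ≤ b y ∧ b y ≤ δ₂)
    (y₀ : EuclideanSpace ℝ (Fin m)) (hy₀ : y₀ ∈ Ω)
    (hLip : ∀ y ∈ Ω, |(b y₀)^2 - (b y)^2| ≤ bs * (m : ℝ) * ‖y₀ - y‖)
    (hdiam : Metric.diam Ω ≤ R) :
    |(∫ y in Ω, p y) / (∫ y in Ω, (b y)^2 * p y) - 1 / (b y₀)^2| ≤
      bs * (m : ℝ) * R * P₀ / ((b y₀)^2 * δ₁^2 * p₀) := by
  have hμ : volume Ω < ⊤ := hΩbd.measure_lt_top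
  have hV : 0 < volume.real Ω := ENNReal.toReal_pos hΩpos.ne' hμ.ne
  have hp_pos : ∀ y ∈ Ω, 0 < p y := fun y hy ↦ hp₀.trans_le (hp y hy).1
  have hb_pos : ∀ y ∈ Ω, 0 < b y := fun y hy ↦ hδ₁.trans_le (hb y hy).1
  have hp_int : IntegrableOn p Ω := integrableOn_of_nonneg_of_le hμ.ne hpm.aestronglyMeasurable
    hΩm (fun y hy ↦ (hp_pos y hy).le) (fun y hy ↦ (hp y hy).2)
  have hbp_int : IntegrableOn (fun y ↦ (b y)^2 * p y) Ω :=
    integrableOn_of_nonneg_of_le (M := δ₂^2 * P₀) hμ.ne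
      ((hbm.pow_const 2).mul hpm).aestronglyMeasurable hΩm
      (fun y hy ↦ by have := hp_pos y hy; positivity)
      (fun y hy ↦ by
        gcongr
        exacts [(hp_pos y hy).le, (hb_pos y hy).le, (hb y hy).2, (hp y hy).2])
  have h_denom : δ₁^2 * p₀ * volume.real Ω ≤ ∫ y in Ω, (b y)^2 * p y :=
    setIntegral_ge_of_const_le_real hΩm hμ.ne
      (fun y hy ↦ by gcongr; exacts [(hb y hy).1, (hp y hy).1]) hbp_int
  have h_num := abs_mul_setIntegral_sub_setIntegral_mul_le (c := (b y₀)^2) (K := bs * m * R)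
    hμ hp_int hbp_int
    (fun y hy ↦ (hLip y hy).trans <| by
      gcongr
      rw [← dist_eq_norm]
      exact (Metric.dist_le_diam_of_mem hΩbd hy₀ hy).trans hdiam)
    (fun y hy ↦ (abs_of_pos (hp_pos y hy)).trans_le (hp y hy).2)
  rw [mul_assoc ((b y₀)^2)]
  exact abs_div_sub_one_div_le (pow_pos (hb_pos y₀ hy₀) 2) hV (by positivity) h_denom h_num
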